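/- arXiv:2205.04527 — 4 statements merged into one kernel-verified Lean document; each statement's English description precedes it below -/
import Mathlib

section
/- For all positive integers m and n, the number of partitions of n into parts not divisible by m equals p(n) + \sum_{k \geq 1} (-1)^k \left( p\left(n - \frac{mk(3k-1)}{2}\right) + p\left(n - \frac{mk(3k+1)}{2}\right) \right), where p denotes the ordinary partition function and p(t) is taken to be 0 whenever t < 0 (so the sum has only finitely many nonzero terms). -/
/-!
Writing `P(X) = ∑ p(n) Xⁿ` and `E(X) = ∏ (1 - Xⁱ)`, one has `P · E = 1`, while multiplying the
generating function `∏_{m ∤ i} (1 - Xⁱ)⁻¹` of partitions into parts not divisible by `m` by `E`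
leaves `∏ (1 - X^{mi}) = E(X^m)`. Hence that generating function is `P(X) · E(X^m)`, and by
Euler's pentagonal number theorem `E(X^m) = ∑_{k ∈ ℤ} (-1)ᵏ X^{m k (3k-1)/2}`; comparing
coefficients of `Xⁿ` gives the formula.
-/

/-- `p(t)` for an integer argument: the number of partitions of `t` when `t ≥ 0`,
and `0` when `t < 0`. -/
def partitionCount (t : ℤ) : ℤ :=
  if 0 ≤ t then (Fintype.card (Nat.Partition t.toNat) : ℤ) else 0

open Finset Nat.Partition PowerSeries PowerSeries.WithPiTopology

section Topological

variable {R : Type*} [CommRing R] [TopologicalSpace R]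

theorem PowerSeries.WithPiTopology.HasSum.expand {ι : Type*} {f : ι → R⟦X⟧} {g : R⟦X⟧}
    {m : ℕ} (hm : m ≠ 0) (h : HasSum f g) :
    HasSum (fun i ↦ expand m hm (f i)) (expand m hm g) := by
  rw [hasSum_iff_hasSum_coeff] at h ⊢
  intro d
  simp_rw [coeff_expand]
  split_ifs
  · exact h _
  · exact hasSum_zero

theorem hasProd_one_sub_X_pow_mul {m : ℕ} (hm : m ≠ 0) :
    HasProd (fun i ↦ (1 - X ^ ((i + 1) * m) : R⟦X⟧)) (expand m hm (pentagonalSeries R)) := by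
  have expand_prod (s : Finset ℕ) :
      ∏ i ∈ s, (1 - X ^ ((i + 1) * m) : R⟦X⟧) = expand m hm (∏ i ∈ s, (1 - X ^ (i + 1))) := by
    simp [map_prod, ← pow_mul, mul_comm m]
  rw [HasProd, tendsto_iff_coeff_tendsto]
  intro d
  apply tendsto_nhds_of_eventually_eq
  filter_upwards [coeff_prod_one_sub_X_pow_eventually_eq R (d / m)] with s hs
  rw [expand_prod, coeff_expand, coeff_expand, hs]

variable [IsTopologicalRing R]

theorem hasProd_powerSeriesMk_card_restricted_mul_pentagonalSeries [T2Space R]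
    (p : ℕ → Prop) [DecidablePred p] :
    HasProd (fun i ↦ if p (i + 1) then 1 else 1 - X ^ (i + 1))
      (PowerSeries.mk (fun n ↦ (#(restricted n p) : R)) * pentagonalSeries R) := by
  convert (hasProd_powerSeriesMk_card_restricted R p).mul (hasProd_one_sub_X_pow R) using 1
  · rfl
  funext i
  split_ifs
  · simp_rw [pow_mul]
    exact (tsum_pow_mul_one_sub_of_constantCoeff_eq_zero (by simp)).symm
  · rw [one_mul]

end Topological

section Algebraic

variable (R : Type*) [CommRing R]

theorem powerSeriesMk_card_mul_pentagonalSeries :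
    PowerSeries.mk (fun n ↦ (Fintype.card n.Partition : R)) * pentagonalSeries R = 1 := by
  let _ : TopologicalSpace R := ⊥
  have : DiscreteTopology R := ⟨rfl⟩
  have h := hasProd_powerSeriesMk_card_restricted_mul_pentagonalSeries (R := R) (fun _ ↦ True)
  simpa [restricted] using h.unique hasProd_one

theorem powerSeriesMk_card_restricted_not_dvd_mul_pentagonalSeries {m : ℕ} (hm : m ≠ 0) :
    PowerSeries.mk (fun n ↦ (#(restricted n (¬ m ∣ ·)) : R)) * pentagonalSeries R =
      expand m hm (pentagonalSeries R) := by
  let _ : TopologicalSpace R := ⊥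
  have : DiscreteTopology R := ⟨rfl⟩
  refine (hasProd_powerSeriesMk_card_restricted_mul_pentagonalSeries _).unique ?_
  have hinj : Function.Injective fun i : ℕ ↦ (i + 1) * m - 1 := by
    intro i j h
    have := Nat.sub_one_cancel (by positivity) (by positivity) h
    simpa [hm] using this
  rw [← hinj.hasProd_iff]
  · convert hasProd_one_sub_X_pow_mul (R := R) hm using 2 with i
    have : (i + 1) * m - 1 + 1 = (i + 1) * m :=
      Nat.sub_add_cancel (Nat.one_le_iff_ne_zero.2 (mul_ne_zero i.succ_ne_zero hm))
    simp [this]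
  · rintro j hj
    rw [if_pos]
    rintro ⟨c, hc⟩
    obtain ⟨i, rfl⟩ : ∃ i, c = i + 1 := Nat.exists_eq_add_one.2 (by grind)
    exact hj ⟨i, by grind⟩

theorem powerSeriesMk_card_restricted_not_dvd {m : ℕ} (hm : m ≠ 0) :
    PowerSeries.mk (fun n ↦ (#(restricted n (¬ m ∣ ·)) : R)) =
      expand m hm (pentagonalSeries R) *
        PowerSeries.mk (fun n ↦ (Fintype.card n.Partition : R)) := by
  rw [← powerSeriesMk_card_restricted_not_dvd_mul_pentagonalSeries R hm, mul_assoc,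
    mul_comm (pentagonalSeries R), powerSeriesMk_card_mul_pentagonalSeries, mul_one]

end Algebraic

theorem hasSum_card_restricted_not_dvd {R : Type*} [CommRing R] [TopologicalSpace R]
    [IsTopologicalRing R] {m : ℕ} (hm : m ≠ 0) (n : ℕ) :
    HasSum (fun k : ℤ ↦ (Int.negOnePow k : R) *
        if m * pentagonal k ≤ n then (Fintype.card (n - m * pentagonal k).Partition : R) else 0)
      (#(restricted n (¬ m ∣ ·)) : R) := by
  have h := ((hasSum_pentagonalSeries R).expand hm).mul_right
    (PowerSeries.mk fun n ↦ (Fintype.card n.Partition : R))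
  rw [← powerSeriesMk_card_restricted_not_dvd] at h
  convert (hasSum_iff_hasSum_coeff R).mp h n using 1
  · funext k
    rw [map_mul (expand m hm), map_intCast, map_pow, expand_X, ← pow_mul, mul_assoc,
      ← map_intCast (C (R := R)), coeff_C_mul, coeff_X_pow_mul']
    simp
  · simp

theorem HasSum.int_eq_add_sum_Icc {M : Type*} [AddCancelCommMonoid M] [TopologicalSpace M]
    [ContinuousAdd M] [T2Space M] {f : ℤ → M} {a : M} (hf : HasSum f a) {N : ℕ}
    (hN : ∀ k : ℤ, N < k.natAbs → f k = 0) :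
    a = f 0 + ∑ k ∈ Icc 1 N, (f k + f (-k)) := by
  have hfin : HasSum (fun k : ℕ ↦ f k + f (-k)) (∑ k ∈ insert 0 (Icc 1 N), (f k + f (-k))) := by
    refine hasSum_sum_of_ne_finset_zero fun k hk ↦ ?_
    have hkN : N < k := by simp at hk; omega
    rw [hN k (by simpa using hkN), hN (-k) (by simpa using hkN), add_zero]
  have := hf.nat_add_neg.unique hfin
  rw [sum_insert (by simp), Nat.cast_zero, neg_zero, add_assoc, add_comm] at this
  exact add_left_cancel this

theorem natAbs_le_pentagonal (k : ℤ) : k.natAbs ≤ pentagonal k := by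
  have := two_mul_natCast_pentagonal k
  zify
  rcases le_total 0 k with hk | hk
  · rw [abs_of_nonneg hk]; nlinarith
  · rw [abs_of_nonpos hk]; nlinarith

theorem mul_natCast_pentagonal (m k : ℤ) : m * pentagonal k = m * k * (3 * k - 1) / 2 := by
  rw [mul_assoc, ← two_mul_natCast_pentagonal, mul_left_comm,
    Int.mul_ediv_cancel_left _ two_ne_zero]

theorem mul_natCast_pentagonal_neg (m k : ℤ) : m * pentagonal (-k) = m * k * (3 * k + 1) / 2 := by
  rw [mul_assoc, ← two_mul_natCast_pentagonal_neg, mul_left_comm,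
    Int.mul_ediv_cancel_left _ two_ne_zero]

theorem partitionCount_of_neg {t : ℤ} (ht : t < 0) : partitionCount t = 0 :=
  if_neg ht.not_ge

theorem partitionCount_natCast_sub (n a : ℕ) :
    partitionCount ((n : ℤ) - a) = if a ≤ n then (Fintype.card (n - a).Partition : ℤ) else 0 := by
  split_ifs with h
  · rw [← Nat.cast_sub h, partitionCount, if_pos (by positivity), Int.toNat_natCast]
  · exact partitionCount_of_neg (by omega)

theorem partitions_not_div_eq_pentagonal_sum_general (m n : ℕ) (hm : 0 < m) :
    (Fintype.card {π : n.Partition // ∀ j ∈ π.parts, ¬ m ∣ j} : ℤ) =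
      partitionCount (n : ℤ) +
        ∑ k ∈ Finset.Icc 1 n, (-1 : ℤ) ^ k *
          (partitionCount ((n : ℤ) - (m : ℤ) * k * (3 * k - 1) / 2) +
           partitionCount ((n : ℤ) - (m : ℤ) * k * (3 * k + 1) / 2)) := by
  have hsum : HasSum (fun k : ℤ ↦ (Int.negOnePow k : ℤ) * partitionCount (n - m * pentagonal k))
      (#(restricted n (¬ m ∣ ·)) : ℤ) := by
    simpa only [← partitionCount_natCast_sub, Nat.cast_mul, Int.cast_id] using
      hasSum_card_restricted_not_dvd (R := ℤ) hm.ne' n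
  have hvanish (k : ℤ) (hk : n < k.natAbs) :
      (Int.negOnePow k : ℤ) * partitionCount (n - m * pentagonal k) = 0 := by
    have := natAbs_le_pentagonal k
    rw [partitionCount_of_neg (by nlinarith), mul_zero]
  rw [Fintype.card_subtype, ← restricted, hsum.int_eq_add_sum_Icc hvanish]
  refine congr_arg₂ _ (by simp [pentagonal_def]) (sum_congr rfl fun k _ ↦ ?_)
  rw [Int.negOnePow_neg, mul_natCast_pentagonal, mul_natCast_pentagonal_neg, ← mul_add,
    Int.coe_negOnePow_natCast]

/-- For all positive integers `m` and `n`, the number of partitions of `n` into parts not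
divisible by `m` equals
`p(n) + ∑_{k ≥ 1} (-1)^k (p(n - m k (3k-1)/2) + p(n - m k (3k+1)/2))`,
where `p(t) = 0` for `t < 0`.  All nonzero terms occur for `1 ≤ k ≤ n`. -/
theorem partitions_not_div_eq_pentagonal_sum (m n : ℕ) (hm : 0 < m) (hn : 0 < n) :
    (Fintype.card {π : n.Partition // ∀ j ∈ π.parts, ¬ m ∣ j} : ℤ) =
      partitionCount (n : ℤ) +
        ∑ k ∈ Finset.Icc 1 n, (-1 : ℤ) ^ k *
          (partitionCount ((n : ℤ) - (m : ℤ) * k * (3 * k - 1) / 2) +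
           partitionCount ((n : ℤ) - (m : ℤ) * k * (3 * k + 1) / 2)) :=
  partitions_not_div_eq_pentagonal_sum_general m n hm
end

section
/- For all positive integers m and n, the number of partitions of n into parts not divisible by m is equal to the number of partitions of n in which each part appears fewer than m times (Glaisher's identity). -/
theorem glaisher_identity_general (m n : ℕ) (hm : 0 < m) :
    Fintype.card {π : n.Partition // ∀ j ∈ π.parts, ¬ m ∣ j} =
      Fintype.card {π : n.Partition // ∀ j ∈ π.parts, π.parts.count j < m} := by
  simpa only [Fintype.card_subtype, Nat.Partition.restricted, Nat.Partition.countRestricted] using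
    Nat.Partition.card_restricted_eq_card_countRestricted n hm

/-- Glaisher's identity: for all positive integers `m` and `n`, the number of partitions of
`n` into parts not divisible by `m` equals the number of partitions of `n` in which each
part appears fewer than `m` times. -/
theorem glaisher_identity (m n : ℕ) (hm : 0 < m) (hn : 0 < n) :
    Fintype.card {π : n.Partition // ∀ j ∈ π.parts, ¬ m ∣ j} =
      Fintype.card {π : n.Partition // ∀ j ∈ π.parts, π.parts.count j < m} :=
  glaisher_identity_general m n hm
end

section
/- For all positive integers m and n, the number of partitions of n into parts not divisible by m equals p(n) + \sum_{\pi \in D} (-1)^{n(\pi)} p(n - m|\pi|), where the sum ranges over all nonempty partitions \pi into distinct parts with m|\pi| \leq n, n(\pi) denotes the number of parts of \pi, and |\pi| denotes the sum of the parts of \pi. -/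
/-!
With `E = ∏ₖ (1 - Xᵏ) = ∑_π (-1)^{n(π)} X^{|π|}` (π running over all partitions into
distinct parts, the empty one included), the partition generating function `P` satisfies
`E * P = 1`. Multiplying the generating function `Q` of partitions into parts not divisible
by `m` by `E` cancels every factor `1 / (1 - Xᵏ)` of `Q`, leaving `∏ₖ (1 - X^{mk}) = E(Xᵐ)`.
Hence `Q = E(Xᵐ) * P`, and comparing coefficients of `Xⁿ` gives the identity, the empty
partition contributing `p(n)`.
-/

open Finset PowerSeries PowerSeries.WithPiTopology

namespace PowerSeries

variable {R : Type*} [CommRing R] (m : ℕ) (hm : m ≠ 0)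

theorem continuous_expand [TopologicalSpace R] :
    Continuous (expand m hm : R⟦X⟧ → R⟦X⟧) := by
  refine continuous_iff_continuousAt.2 fun φ ↦
    (tendsto_iff_coeff_tendsto _ _ _ _).2 fun d ↦ ?_
  simp_rw [coeff_expand]
  split_ifs
  · exact (continuous_coeff R _).tendsto φ
  · exact tendsto_const_nhds

theorem coeff_expand_mul_eq_sum_range (φ ψ : R⟦X⟧) (n : ℕ) :
    coeff n (expand m hm φ * ψ) =
      ∑ t ∈ range (n / m + 1), coeff t φ * coeff (n - m * t) ψ := by
  have hm' : 0 < m := Nat.pos_of_ne_zero hm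
  rw [coeff_mul,
    Nat.sum_antidiagonal_eq_sum_range_succ (fun a b ↦ coeff a (expand m hm φ) * coeff b ψ)]
  simp_rw [coeff_expand, ite_mul, zero_mul]
  rw [← sum_filter]
  refine sum_nbij' (· / m) (m * ·) ?_ ?_ ?_ ?_ ?_
  · rintro a ha
    obtain ⟨ha, k, rfl⟩ := mem_filter.1 ha
    rw [mem_range, Nat.mul_div_cancel_left k hm', Nat.lt_succ_iff, Nat.le_div_iff_mul_le hm',
      mul_comm]
    exact Nat.lt_succ_iff.1 (mem_range.1 ha)
  · intro t ht
    refine mem_filter.2 ⟨mem_range.2 (Nat.lt_succ_of_le ?_), dvd_mul_right m t⟩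
    rw [mul_comm]
    exact (Nat.le_div_iff_mul_le hm').1 (Nat.lt_succ_iff.1 (mem_range.1 ht))
  · intro a ha
    exact Nat.mul_div_cancel' (mem_filter.1 ha).2
  · intro t _
    exact Nat.mul_div_cancel_left t hm'
  · intro a ha
    simp [Nat.mul_div_cancel' (mem_filter.1 ha).2]

end PowerSeries

theorem Multiset.toFinsupp_prod_ite_eq_one {α M : Type*} [DecidableEq α] [CommMonoidWithZero M]
    (s : Multiset α) (r : M) :
    s.toFinsupp.prod (fun _ c ↦ if c = 1 then r else 0) = if s.Nodup then r ^ s.card else 0 := by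
  rw [Finsupp.prod, Multiset.toFinsupp_support]
  split_ifs with hs
  · rw [← Multiset.toFinset_card_of_nodup hs, ← prod_const]
    refine prod_congr rfl fun a ha ↦ ?_
    rw [Multiset.toFinsupp_apply, Multiset.count_eq_one_of_mem hs (Multiset.mem_toFinset.1 ha),
      if_pos rfl]
  · obtain ⟨a, ha⟩ : ∃ a, 1 < s.count a := by
      simpa [Multiset.nodup_iff_count_le_one] using hs
    refine Finset.prod_eq_zero (i := a)
      (Multiset.mem_toFinset.2 (Multiset.count_pos.1 (by omega))) ?_
    rw [Multiset.toFinsupp_apply, if_neg ha.ne']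

namespace Nat.Partition

variable (R : Type*) [TopologicalSpace R] [T2Space R]

theorem hasProd_powerSeriesMk_card [CommSemiring R] [IsTopologicalSemiring R] :
    HasProd (fun i ↦ ∑' j, (X : R⟦X⟧) ^ ((i + 1) * j))
      (PowerSeries.mk fun n ↦ (Fintype.card n.Partition : R)) := by
  simpa [restricted] using hasProd_powerSeriesMk_card_restricted R (fun _ ↦ True)

theorem hasProd_powerSeriesMk_sum_distincts_neg_one_pow [CommRing R] :
    HasProd (fun i ↦ 1 - (X : R⟦X⟧) ^ (i + 1))
      (PowerSeries.mk fun n ↦ ∑ π ∈ distincts n, (-1 : R) ^ π.parts.card) := by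
  convert! hasProd_genFun (fun _ c ↦ if c = 1 then (-1 : R) else 0) using 1
  · ext1 i
    rw [tsum_eq_single 0 fun j hj ↦ by simp [hj]]
    simp [sub_eq_add_neg]
  · ext n
    simp_rw [genFun, Multiset.toFinsupp_prod_ite_eq_one, distincts, sum_filter]

section
variable [CommRing R] [IsTopologicalRing R]

theorem powerSeriesMk_sum_distincts_neg_one_pow_mul_card_eq_one :
    (PowerSeries.mk fun n ↦ ∑ π ∈ distincts n, (-1 : R) ^ π.parts.card) *
      PowerSeries.mk (fun n ↦ (Fintype.card n.Partition : R)) = 1 := by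
  have hfactor (i : ℕ) : (1 - (X : R⟦X⟧) ^ (i + 1)) * ∑' j, X ^ ((i + 1) * j) = 1 := by
    simp_rw [pow_mul]
    exact one_sub_mul_tsum_pow_of_constantCoeff_eq_zero (by simp)
  refine ((hasProd_powerSeriesMk_sum_distincts_neg_one_pow R).mul
    (hasProd_powerSeriesMk_card R)).unique ?_
  simpa only [hfactor] using hasProd_one

theorem powerSeriesMk_card_restricted_not_dvd_mul_sum_distincts {m : ℕ} (hm : m ≠ 0) :
    PowerSeries.mk (fun n ↦ (#(restricted n (¬ m ∣ ·)) : R)) *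
        (PowerSeries.mk fun n ↦ ∑ π ∈ distincts n, (-1 : R) ^ π.parts.card) =
      expand m hm (PowerSeries.mk fun n ↦ ∑ π ∈ distincts n, (-1 : R) ^ π.parts.card) := by
  have hfactor (i : ℕ) : (if ¬ m ∣ i + 1 then ∑' j, (X : R⟦X⟧) ^ ((i + 1) * j) else 1) *
      (1 - X ^ (i + 1)) = if m ∣ i + 1 then 1 - X ^ (i + 1) else 1 := by
    by_cases h : m ∣ i + 1
    · rw [if_neg (not_not_intro h), if_pos h, one_mul]
    · rw [if_pos h, if_neg h]
      simp_rw [pow_mul]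
      exact tsum_pow_mul_one_sub_of_constantCoeff_eq_zero (by simp)
  have hprod := (hasProd_powerSeriesMk_card_restricted R (¬ m ∣ ·)).mul
    (hasProd_powerSeriesMk_sum_distincts_neg_one_pow R)
  simp only [hfactor] at hprod
  refine hprod.unique ?_
  have hexpand := (hasProd_powerSeriesMk_sum_distincts_neg_one_pow R).map (expand m hm)
    (continuous_expand m hm)
  -- The factors of `hprod` that are not `1` sit at the indices `(i + 1) * m - 1`.
  have hsucc (i : ℕ) : (i + 1) * m - 1 + 1 = (i + 1) * m :=
    Nat.sub_add_cancel (Nat.one_le_iff_ne_zero.2 (mul_ne_zero i.succ_ne_zero hm))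
  have hinj : Function.Injective fun i : ℕ ↦ (i + 1) * m - 1 := by
    intro a b h
    have := congrArg (· + 1) h
    simp only [hsucc] at this
    exact Nat.succ_injective (Nat.eq_of_mul_eq_mul_right (Nat.pos_of_ne_zero hm) this)
  refine (hinj.hasProd_iff fun k hk ↦ ?_).1 ?_
  · refine if_neg fun ⟨j, hj⟩ ↦ hk ⟨j - 1, ?_⟩
    have : j ≠ 0 := by rintro rfl; simp at hj
    dsimp only
    rw [Nat.sub_add_cancel (Nat.one_le_iff_ne_zero.2 this), mul_comm, ← hj,
      Nat.add_sub_cancel]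
  · convert! hexpand using 1
    funext i
    rw [Function.comp_apply, Function.comp_apply, hsucc, if_pos (dvd_mul_left m _), map_sub,
      map_one, map_pow, expand_X, ← pow_mul, mul_comm]

theorem powerSeriesMk_card_restricted_not_dvd_eq_expand_mul {m : ℕ} (hm : m ≠ 0) :
    PowerSeries.mk (fun n ↦ (#(restricted n (¬ m ∣ ·)) : R)) =
      expand m hm (PowerSeries.mk fun n ↦ ∑ π ∈ distincts n, (-1 : R) ^ π.parts.card) *
        PowerSeries.mk (fun n ↦ (Fintype.card n.Partition : R)) := by
  rw [← powerSeriesMk_card_restricted_not_dvd_mul_sum_distincts R hm, mul_assoc,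
    powerSeriesMk_sum_distincts_neg_one_pow_mul_card_eq_one, mul_one]

end

theorem card_restricted_not_dvd_eq_sum {m : ℕ} (hm : m ≠ 0) (n : ℕ) :
    (#(restricted n (¬ m ∣ ·)) : ℤ) =
      ∑ t ∈ range (n / m + 1),
        (∑ π ∈ distincts t, (-1 : ℤ) ^ π.parts.card) *
          Fintype.card (n - m * t).Partition := by
  simpa [coeff_expand_mul_eq_sum_range] using
    congrArg (coeff n) (powerSeriesMk_card_restricted_not_dvd_eq_expand_mul ℤ hm)

end Nat.Partition

theorem partitions_not_div_eq_distinct_sum_general (m n : ℕ) (hm : 0 < m) :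
    (Fintype.card {π : n.Partition // ∀ j ∈ π.parts, ¬ m ∣ j} : ℤ) =
      (Fintype.card n.Partition : ℤ) +
        ∑ t ∈ Finset.Icc 1 (n / m), ∑ π ∈ Nat.Partition.distincts t,
          (-1 : ℤ) ^ (Multiset.card π.parts) *
            (Fintype.card (Nat.Partition (n - m * t)) : ℤ) := by
  rw [Fintype.card_subtype]
  change (#(Nat.Partition.restricted n (¬ m ∣ ·)) : ℤ) = _
  rw [Nat.Partition.card_restricted_not_dvd_eq_sum hm.ne', Nat.range_succ_eq_Icc_zero,
    ← insert_Icc_add_one_left_eq_Icc (Nat.zero_le _), sum_insert (by simp)]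
  simp [sum_mul, Nat.Partition.distincts]

/-- For all positive integers `m` and `n`, the number of partitions of `n` into parts not
divisible by `m` equals `p(n) + ∑_{π ∈ D, m|π| ≤ n} (-1)^{n(π)} p(n - m|π|)`, where the sum
ranges over nonempty partitions `π` into distinct parts with `m|π| ≤ n`; such partitions are
exactly the distinct partitions of the numbers `t` with `1 ≤ t` and `m * t ≤ n`,
i.e. `t ∈ [1, n / m]`. -/
theorem partitions_not_div_eq_distinct_sum (m n : ℕ) (hm : 0 < m) (hn : 0 < n) :
    (Fintype.card {π : n.Partition // ∀ j ∈ π.parts, ¬ m ∣ j} : ℤ) =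
      (Fintype.card n.Partition : ℤ) +
        ∑ t ∈ Finset.Icc 1 (n / m), ∑ π ∈ Nat.Partition.distincts t,
          (-1 : ℤ) ^ (Multiset.card π.parts) *
            (Fintype.card (Nat.Partition (n - m * t)) : ℤ) :=
  partitions_not_div_eq_distinct_sum_general m n hm
end

section
/- For all positive integers m and n, the number of partitions of n in which each part appears fewer than m times equals p(n) + \sum_{\pi \in D} (-1)^{n(\pi)} p(n - m|\pi|), where the sum ranges over all nonempty partitions \pi into distinct parts with m|\pi| \leq n, n(\pi) denotes the number of parts of \pi, and |\pi| denotes the sum of the parts of \pi. -/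
/-!
Write `F(π)` for the set of parts of `π` that occur at least `m` times. Since
`∑_{T ⊆ F(π)} (-1)^|T|` is `1` if `F(π) = ∅` and `0` otherwise, the left side is a signed count
of pairs `(π, T)` with `T ⊆ F(π)`. Removing `m` copies of each element of `T` from `π` maps these
pairs bijectively onto triples `(t, σ, μ)`, where `σ` is the partition of `t` into the distinct
parts `T` and `μ` is any partition of `n - m t`; the sign becomes `(-1)^{n(σ)}`, and `t = 0`
contributes `p(n)`.
-/

open Finset

namespace Nat.Partition

variable {k m n : ℕ}

def frequentParts (m : ℕ) (π : n.Partition) : Finset ℕ :=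
  {j ∈ π.parts.toFinset | m ≤ π.parts.count j}

@[simp]
theorem mem_frequentParts {π : n.Partition} {j : ℕ} :
    j ∈ π.frequentParts m ↔ j ∈ π.parts ∧ m ≤ π.parts.count j := by
  simp [frequentParts]

theorem frequentParts_eq_empty_iff {π : n.Partition} :
    π.frequentParts m = ∅ ↔ ∀ j ∈ π.parts, π.parts.count j < m := by
  simp [Finset.eq_empty_iff_forall_notMem]

theorem subset_frequentParts_iff (hm : 0 < m) {π : n.Partition} {T : Finset ℕ} :
    T ⊆ π.frequentParts m ↔ m • T.val ≤ π.parts := by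
  simp only [Finset.subset_iff, mem_frequentParts, Multiset.le_iff_count, Multiset.count_nsmul,
    Multiset.count_eq_of_nodup T.nodup, Finset.mem_val]
  constructor
  · intro h j
    split_ifs with hj
    · simpa using (h hj).2
    · simp
  · intro h j hj
    have hcount : m ≤ π.parts.count j := by simpa [hj] using h j
    exact ⟨Multiset.count_pos.1 (hm.trans_le hcount), hcount⟩

@[simps]
def removeParts (π : n.Partition) (s : Multiset ℕ) (hs : s ≤ π.parts) (h : k + s.sum = n) :
    k.Partition where
  parts := π.parts - s
  parts_pos hi := π.parts_pos (Multiset.mem_of_le tsub_le_self hi)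
  parts_sum := by
    have := congrArg Multiset.sum (tsub_add_cancel_of_le hs)
    rw [Multiset.sum_add, π.parts_sum] at this
    omega

@[simps]
def addParts (μ : k.Partition) (s : Multiset ℕ) (hs : ∀ i ∈ s, 0 < i) (h : k + s.sum = n) :
    n.Partition where
  parts := μ.parts + s
  parts_pos hi := (Multiset.mem_add.1 hi).elim μ.parts_pos (hs _)
  parts_sum := by rw [Multiset.sum_add, μ.parts_sum, h]

@[simps]
def ofFinset (T : Finset ℕ) (hT : ∀ i ∈ T, 0 < i) : T.val.sum.Partition where
  parts := T.val
  parts_pos hi := hT _ hi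
  parts_sum := rfl

theorem sum_le_of_le_parts {π : n.Partition} {s : Multiset ℕ} (hs : s ≤ π.parts) : s.sum ≤ n := by
  obtain ⟨u, hu⟩ := Multiset.le_iff_exists_add.1 hs
  rw [← π.parts_sum, hu, Multiset.sum_add]
  exact Nat.le_add_right _ _

theorem sigma_prod_ext {f : ℕ → ℕ} {a b : Σ t, t.Partition × (f t).Partition}
    (h₁ : a.2.1.parts = b.2.1.parts) (h₂ : a.2.2.parts = b.2.2.parts) : a = b := by
  obtain ⟨t, σ, μ⟩ := a
  obtain ⟨t', σ', μ'⟩ := b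
  obtain rfl : t = t' := by rw [← σ.parts_sum, ← σ'.parts_sum, h₁]
  obtain rfl : σ = σ' := Partition.ext h₁
  obtain rfl : μ = μ' := Partition.ext h₂
  rfl

theorem sum_sigma_powerset_frequentParts {M : Type*} [AddCommMonoid M] (hm : 0 < m)
    (f : ℕ → M) :
    ∑ a ∈ univ.sigma fun π : n.Partition => (π.frequentParts m).powerset, f #a.2 =
      ∑ b ∈ (Icc 0 (n / m)).sigma fun t => distincts t ×ˢ (univ : Finset (n - m * t).Partition),
        f (Multiset.card b.2.1.parts) := by
  set S := univ.sigma fun π : n.Partition => (π.frequentParts m).powerset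
  set R := (Icc 0 (n / m)).sigma fun t => distincts t ×ˢ (univ : Finset (n - m * t).Partition)
  have mem_S {a} : a ∈ S ↔ m • a.2.val ≤ a.1.parts := by
    simp [S, subset_frequentParts_iff hm]
  have mem_R {b} : b ∈ R ↔ m * b.1 ≤ n ∧ b.2.1.parts.Nodup := by
    simp [R, distincts, Nat.le_div_iff_mul_le hm, mul_comm]
  have sum_nsmul (s : Multiset ℕ) : (m • s).sum = m * s.sum := by
    rw [Multiset.sum_nsmul, smul_eq_mul]
  have pos_of_mem_S {a} (ha : a ∈ S) {i} (hi : i ∈ a.2) : 0 < i :=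
    a.1.parts_pos <| Multiset.mem_of_le (mem_S.1 ha) (Multiset.mem_nsmul.2 ⟨hm.ne', hi⟩)
  have mul_sum_le_of_mem_S {a} (ha : a ∈ S) : m * a.2.val.sum ≤ n :=
    sum_nsmul _ ▸ sum_le_of_le_parts (mem_S.1 ha)
  have toFinset_val_of_mem_R {b} (hb : b ∈ R) : b.2.1.parts.toFinset.val = b.2.1.parts :=
    Multiset.dedup_eq_self.2 (mem_R.1 hb).2
  refine sum_bij'
    (fun a ha => ⟨_, ofFinset a.2 fun _ => pos_of_mem_S ha,
      a.1.removeParts (m • a.2.val) (mem_S.1 ha)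
        (by rw [sum_nsmul]; exact Nat.sub_add_cancel (mul_sum_le_of_mem_S ha))⟩)
    (fun b hb => ⟨b.2.2.addParts (m • b.2.1.parts)
      (fun _ hi => b.2.1.parts_pos (Multiset.mem_of_mem_nsmul hi))
      (by rw [sum_nsmul, b.2.1.parts_sum]; exact Nat.sub_add_cancel (mem_R.1 hb).1),
      b.2.1.parts.toFinset⟩) ?_ ?_ ?_ ?_ ?_
  · exact fun a ha => mem_R.2 ⟨mul_sum_le_of_mem_S ha, a.2.nodup⟩
  · intro b hb
    refine mem_S.2 ?_
    simp only [toFinset_val_of_mem_R hb, addParts_parts, le_add_self]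
  · intro a ha
    exact Sigma.ext (Partition.ext (tsub_add_cancel_of_le (mem_S.1 ha)))
      (heq_of_eq a.2.val_toFinset)
  · intro b hb
    refine sigma_prod_ext (toFinset_val_of_mem_R hb) ?_
    simp only [removeParts_parts, addParts_parts, toFinset_val_of_mem_R hb, add_tsub_cancel_right]
  · exact fun _ _ => rfl

theorem card_countRestricted_eq_sum_powerset (n m : ℕ) :
    (#(countRestricted n m) : ℤ) =
      ∑ π : n.Partition, ∑ T ∈ (π.frequentParts m).powerset, (-1) ^ #T := by
  rw [countRestricted, card_filter, Nat.cast_sum]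
  refine sum_congr rfl fun π _ => ?_
  simp only [sum_powerset_neg_one_pow_card, frequentParts_eq_empty_iff]
  push_cast
  rfl

end Nat.Partition

theorem partitions_repeat_lt_eq_distinct_sum_general (m n : ℕ) (hm : 0 < m) :
    (Fintype.card {π : n.Partition // ∀ j ∈ π.parts, π.parts.count j < m} : ℤ) =
      (Fintype.card n.Partition : ℤ) +
        ∑ t ∈ Finset.Icc 1 (n / m), ∑ π ∈ Nat.Partition.distincts t,
          (-1 : ℤ) ^ (Multiset.card π.parts) *
            (Fintype.card (Nat.Partition (n - m * t)) : ℤ) := by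
  rw [Fintype.card_subtype]
  change (#(Nat.Partition.countRestricted n m) : ℤ) = _
  rw [Nat.Partition.card_countRestricted_eq_sum_powerset, sum_sigma',
    Nat.Partition.sum_sigma_powerset_frequentParts hm, sum_sigma,
    ← add_sum_Ioc_eq_sum_Icc (Nat.zero_le _),
    show Icc 1 (n / m) = Ioc 0 (n / m) from Icc_succ_left_eq_Ioc 0 _]
  congr 1
  · simp [Nat.Partition.distincts]
  · refine sum_congr rfl fun t _ => ?_
    simp [sum_product, mul_comm]

/-- For all positive integers `m` and `n`, the number of partitions of `n` in which each part
appears fewer than `m` times equals `p(n) + ∑_{π ∈ D, m|π| ≤ n} (-1)^{n(π)} p(n - m|π|)`,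
where the sum ranges over nonempty partitions `π` into distinct parts with `m|π| ≤ n`; such
partitions are exactly the distinct partitions of the numbers `t` with `1 ≤ t` and
`m * t ≤ n`, i.e. `t ∈ [1, n / m]`. -/
theorem partitions_repeat_lt_eq_distinct_sum (m n : ℕ) (hm : 0 < m) (hn : 0 < n) :
    (Fintype.card {π : n.Partition // ∀ j ∈ π.parts, π.parts.count j < m} : ℤ) =
      (Fintype.card n.Partition : ℤ) +
        ∑ t ∈ Finset.Icc 1 (n / m), ∑ π ∈ Nat.Partition.distincts t,
          (-1 : ℤ) ^ (Multiset.card π.parts) *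
            (Fintype.card (Nat.Partition (n - m * t)) : ℤ) :=
  partitions_repeat_lt_eq_distinct_sum_general m n hm
end
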